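/- Rogers–Fine type identity: (1−t)·F(0,b;t;q) = Σ_{n≥0} (bt)^n q^{n²} / ((bq;q)_n (tq;q)_n), where F(0,b;t;q) = Σ_{n≥0} t^n/(bq;q)_n, valid for |q|<1, |t|<1 and bq^m ≠ 1, tq^m ≠ 1 for all m ≥ 1. -/

import Mathlib

/-!
Write `R k = (1 - t q^k) F(0, b q^k; t q^k; q)` and `c k` for the `k`-th term of the right-hand
side. Fine's functional equation `(1 - t) G(a, t) = 1 + a t / (1 - a) G(a q, t q)`, for
`G(a, t) = ∑ tⁿ / (a;q)ₙ`, says `R k = 1 + d k R (k + 1)` with `d k = c (k + 1) / c k`. Unrolling,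
`R 0 = ∑_{k<N} c k + c N R N`. Since `d k → 0` the `c k` are summable, and `R N` stays bounded
because `‖(a;q)ₙ‖ ≥ 1 - ‖a‖ / (1 - ‖q‖)` uniformly in `n`, so the remainder tends to zero.
-/

open Complex

/-- The q-Pochhammer symbol `(a;q)_n = ∏_{j=0}^{n-1} (1 - a q^j)`. -/
noncomputable def qPoch (a q : ℂ) (n : ℕ) : ℂ := ∏ j ∈ Finset.range n, (1 - a * q ^ j)

open Filter Topology

section Iteration

variable {α : Type*} [Ring α] {R c d : ℕ → α}

theorem eq_sum_range_add_mul_of_eq_one_add_mul (hR : ∀ k, R k = 1 + d k * R (k + 1))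
    (hc₀ : c 0 = 1) (hc : ∀ k, c (k + 1) = c k * d k) (N : ℕ) :
    R 0 = ∑ k ∈ Finset.range N, c k + c N * R N := by
  induction N with
  | zero => simp [hc₀]
  | succ N ih => rw [ih, hR N, Finset.sum_range_succ, hc, mul_add, mul_one, mul_assoc, add_assoc]

theorem eq_tsum_of_eq_one_add_mul [TopologicalSpace α] [ContinuousAdd α] [T2Space α]
    (hR : ∀ k, R k = 1 + d k * R (k + 1))
    (hc₀ : c 0 = 1) (hc : ∀ k, c (k + 1) = c k * d k) (hsum : Summable c)
    (htail : Tendsto (fun N ↦ c N * R N) atTop (𝓝 0)) :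
    R 0 = ∑' k, c k := by
  have hlim := hsum.hasSum.tendsto_sum_nat.add htail
  rw [add_zero] at hlim
  refine tendsto_nhds_unique ?_ hlim
  simp only [← eq_sum_range_add_mul_of_eq_one_add_mul hR hc₀ hc, tendsto_const_nhds]

end Iteration

theorem summable_of_succ_eq_mul_of_tendsto {R : Type*} [NormedRing R] [CompleteSpace R]
    {f d : ℕ → R} {l : R} (hl : ‖l‖ < 1) (hd : Tendsto d atTop (𝓝 l))
    (hf : ∀ n, f (n + 1) = f n * d n) : Summable f := by
  obtain ⟨r, hlr, hr⟩ := exists_between hl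
  refine summable_of_ratio_norm_eventually_le hr ?_
  filter_upwards [hd.norm.eventually (gt_mem_nhds hlr)] with n hn
  rw [hf, mul_comm r]
  exact (norm_mul_le _ _).trans (mul_le_mul_of_nonneg_left hn.le (norm_nonneg _))

theorem Finset.one_sub_sum_le_prod_one_sub {ι : Type*} (s : Finset ι) {x : ι → ℝ}
    (h₀ : ∀ i ∈ s, 0 ≤ x i) (h₁ : ∀ i ∈ s, x i ≤ 1) :
    1 - ∑ i ∈ s, x i ≤ ∏ i ∈ s, (1 - x i) := by
  induction s using Finset.cons_induction with
  | empty => simp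
  | cons i s hi ih =>
    simp only [Finset.mem_cons, forall_eq_or_imp] at h₀ h₁
    rw [Finset.prod_cons, Finset.sum_cons]
    have hs : 0 ≤ ∑ j ∈ s, x j := Finset.sum_nonneg h₀.2
    have hp : 0 ≤ ∏ j ∈ s, (1 - x j) := Finset.prod_nonneg fun j hj ↦ sub_nonneg.2 (h₁.2 j hj)
    nlinarith [ih h₀.2 h₁.2]

section qPoch

variable {a q : ℂ}

theorem qPoch_zero (a q : ℂ) : qPoch a q 0 = 1 := by
  simp [qPoch]

theorem qPoch_succ (a q : ℂ) (n : ℕ) : qPoch a q (n + 1) = qPoch a q n * (1 - a * q ^ n) :=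
  Finset.prod_range_succ _ n

theorem qPoch_succ_eq_one_sub_mul (a q : ℂ) (n : ℕ) :
    qPoch a q (n + 1) = (1 - a) * qPoch (a * q) q n := by
  simp only [qPoch, Finset.prod_range_succ', pow_zero, mul_one, pow_succ, mul_assoc, mul_comm]

theorem qPoch_ne_zero (ha : ∀ j, a * q ^ j ≠ 1) (n : ℕ) : qPoch a q n ≠ 0 :=
  Finset.prod_ne_zero_iff.2 fun j _ ↦ sub_ne_zero.2 (ha j).symm

theorem one_sub_div_le_norm_qPoch (hq : ‖q‖ < 1) (n : ℕ) :
    1 - ‖a‖ / (1 - ‖q‖) ≤ ‖qPoch a q n‖ := by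
  have hq' : 0 < 1 - ‖q‖ := sub_pos.2 hq
  rcases le_or_gt ‖a‖ 1 with ha | ha
  swap
  · have : 1 < ‖a‖ / (1 - ‖q‖) := (one_lt_div hq').2 (by linarith [norm_nonneg q])
    linarith [norm_nonneg (qPoch a q n)]
  have hgeom : ∑ j ∈ Finset.range n, ‖q‖ ^ j ≤ 1 / (1 - ‖q‖) := by
    have := geom_sum_Ico_le_of_lt_one (m := 0) (n := n) (norm_nonneg q) hq
    rwa [← Finset.range_eq_Ico, pow_zero] at this
  calc 1 - ‖a‖ / (1 - ‖q‖)
      ≤ 1 - ∑ j ∈ Finset.range n, ‖a‖ * ‖q‖ ^ j := by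
        rw [← Finset.mul_sum, div_eq_mul_one_div]
        gcongr
    _ ≤ ∏ j ∈ Finset.range n, (1 - ‖a‖ * ‖q‖ ^ j) :=
        Finset.one_sub_sum_le_prod_one_sub _ (fun j _ ↦ by positivity)
          fun j _ ↦ mul_le_one₀ ha (by positivity) (pow_le_one₀ (norm_nonneg q) hq.le)
    _ ≤ ‖qPoch a q n‖ := by
        rw [qPoch, norm_prod]
        refine Finset.prod_le_prod (fun j _ ↦ ?_) fun j _ ↦ ?_
        · exact sub_nonneg.2 (mul_le_one₀ ha (by positivity) (pow_le_one₀ (norm_nonneg q) hq.le))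
        · simpa [norm_mul, norm_pow] using norm_sub_norm_le (1 : ℂ) (a * q ^ j)

end qPoch

/-- `fineSeries (b * q) q t` is Fine's `F(0, b; t; q)`. -/
noncomputable def fineSeries (a q t : ℂ) : ℂ := ∑' n, t ^ n / qPoch a q n

section fineSeries

variable {a q t : ℂ}

theorem summable_fineSeries (hq : ‖q‖ < 1) (ht : ‖t‖ < 1) :
    Summable fun n ↦ t ^ n / qPoch a q n := by
  refine summable_of_succ_eq_mul_of_tendsto ht (d := fun n ↦ t / (1 - a * q ^ n)) (l := t) ?_
    fun n ↦ ?_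
  · have h : Tendsto (fun n ↦ 1 - a * q ^ n) atTop (𝓝 1) := by
      simpa using ((tendsto_pow_atTop_nhds_zero_of_norm_lt_one hq).const_mul a).const_sub 1
    simpa [div_eq_mul_inv] using (h.inv₀ one_ne_zero).const_mul t
  · rw [qPoch_succ, pow_succ, mul_div_mul_comm]

theorem norm_fineSeries_le (hq : ‖q‖ < 1) (ht : ‖t‖ < 1) (ha : ‖a‖ ≤ (1 - ‖q‖) / 2) :
    ‖fineSeries a q t‖ ≤ 2 * (1 - ‖t‖)⁻¹ := by
  have hP : ∀ n, 1 / 2 ≤ ‖qPoch a q n‖ := fun n ↦ by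
    have : ‖a‖ / (1 - ‖q‖) ≤ 1 / 2 := by rw [div_le_iff₀ (by linarith)]; linarith
    linarith [one_sub_div_le_norm_qPoch (a := a) hq n]
  refine tsum_of_norm_bounded ((hasSum_geometric_of_lt_one (norm_nonneg t) ht).mul_left 2)
    fun n ↦ ?_
  rw [norm_div, norm_pow, div_le_iff₀ (by linarith [hP n])]
  nlinarith [hP n, pow_nonneg (norm_nonneg t) n]

theorem one_sub_mul_fineSeries (hq : ‖q‖ < 1) (ht : ‖t‖ < 1) (ha : ∀ j, a * q ^ j ≠ 1) :
    (1 - t) * fineSeries a q t = 1 + a * t / (1 - a) * fineSeries (a * q) q (t * q) := by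
  set f : ℕ → ℂ := fun n ↦ t ^ n / qPoch a q n
  have hf : Summable f := summable_fineSeries hq ht
  have ha₀ : 1 - a ≠ 0 := sub_ne_zero.2 (by simpa using (ha 0).symm)
  -- telescoping against the two factorisations of `(a;q)_{n+1}`
  have hdiff : ∀ n,
      f (n + 1) - t * f n = a * t / (1 - a) * ((t * q) ^ n / qPoch (a * q) q n) := by
    intro n
    have hP := qPoch_succ a q n
    rw [qPoch_succ_eq_one_sub_mul] at hP
    have hQ : qPoch (a * q) q n ≠ 0 :=
      qPoch_ne_zero (fun j ↦ by simpa [pow_succ', mul_assoc] using ha (j + 1)) n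
    have hX : 1 - a * q ^ n ≠ 0 := sub_ne_zero.2 (ha n).symm
    have hP₀ := qPoch_ne_zero ha n
    simp only [f]
    rw [qPoch_succ]
    field_simp
    linear_combination (a * t ^ (n + 1) * q ^ n) * hP
  calc (1 - t) * fineSeries a q t = f 0 + (∑' n, f (n + 1) - ∑' n, t * f n) := by
        rw [fineSeries, tsum_mul_left, hf.tsum_eq_zero_add]; ring
    _ = 1 + a * t / (1 - a) * fineSeries (a * q) q (t * q) := by
        rw [← ((summable_nat_add_iff 1).2 hf).tsum_sub (hf.mul_left t), tsum_congr hdiff,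
          tsum_mul_left, fineSeries]
        simp [f, qPoch_zero]

end fineSeries

noncomputable def rogersFineTerm (b q t : ℂ) (k : ℕ) : ℂ :=
  (b * t) ^ k * q ^ (k ^ 2) / (qPoch (b * q) q k * qPoch (t * q) q k)

noncomputable def rogersFineRatio (b q t : ℂ) (k : ℕ) : ℂ :=
  b * t * q ^ (2 * k + 1) / ((1 - b * q ^ (k + 1)) * (1 - t * q ^ (k + 1)))

/-- `(1 - t q^k) F(0, b q^k; t q^k; q)`. -/
noncomputable def shiftedFine (b q t : ℂ) (k : ℕ) : ℂ :=
  (1 - t * q ^ k) * fineSeries (b * q ^ (k + 1)) q (t * q ^ k)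

theorem norm_mul_pow_le_of_norm_le_one {q : ℂ} (t : ℂ) (hq : ‖q‖ ≤ 1) (k : ℕ) :
    ‖t * q ^ k‖ ≤ ‖t‖ := by
  rw [norm_mul, norm_pow]
  exact mul_le_of_le_one_right (norm_nonneg t) (pow_le_one₀ (norm_nonneg q) hq)

section RogersFine

variable {b q t : ℂ}

theorem rogersFineTerm_zero (b q t : ℂ) : rogersFineTerm b q t 0 = 1 := by
  simp [rogersFineTerm, qPoch_zero]

theorem rogersFineTerm_succ (b q t : ℂ) (k : ℕ) :
    rogersFineTerm b q t (k + 1) = rogersFineTerm b q t k * rogersFineRatio b q t k := by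
  simp only [rogersFineTerm, rogersFineRatio, qPoch_succ, div_eq_mul_inv, mul_inv]
  ring

theorem tendsto_rogersFineRatio (hq : ‖q‖ < 1) :
    Tendsto (rogersFineRatio b q t) atTop (𝓝 0) := by
  have hpow : Tendsto (fun k ↦ q ^ (k + 1)) atTop (𝓝 0) :=
    (tendsto_add_atTop_iff_nat 1).2 (tendsto_pow_atTop_nhds_zero_of_norm_lt_one hq)
  have hnum : Tendsto (fun k ↦ b * t * q ^ (2 * k + 1)) atTop (𝓝 0) := by
    simpa using (hpow.comp (tendsto_id.const_mul_atTop' two_pos)).const_mul (b * t)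
  have hden : Tendsto (fun k ↦ (1 - b * q ^ (k + 1)) * (1 - t * q ^ (k + 1))) atTop (𝓝 1) := by
    simpa using ((hpow.const_mul b).const_sub 1).mul ((hpow.const_mul t).const_sub 1)
  rw [← zero_div 1]
  exact hnum.div hden one_ne_zero

theorem summable_rogersFineTerm (hq : ‖q‖ < 1) : Summable (rogersFineTerm b q t) :=
  summable_of_succ_eq_mul_of_tendsto (by simp) (tendsto_rogersFineRatio hq)
    (rogersFineTerm_succ b q t)

theorem shiftedFine_eq_one_add_mul (hq : ‖q‖ < 1) (ht : ‖t‖ < 1)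
    (hb : ∀ m : ℕ, 1 ≤ m → b * q ^ m ≠ 1) (htq : ∀ m : ℕ, 1 ≤ m → t * q ^ m ≠ 1) (k : ℕ) :
    shiftedFine b q t k = 1 + rogersFineRatio b q t k * shiftedFine b q t (k + 1) := by
  have htk : ‖t * q ^ k‖ < 1 := (norm_mul_pow_le_of_norm_le_one t hq.le k).trans_lt ht
  have hbk : ∀ j, b * q ^ (k + 1) * q ^ j ≠ 1 := fun j ↦ by
    simpa [pow_add, mul_assoc] using hb (k + 1 + j) (by omega)
  have hcoef : rogersFineRatio b q t k * (1 - t * q ^ (k + 1))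
      = b * q ^ (k + 1) * (t * q ^ k) / (1 - b * q ^ (k + 1)) := by
    rw [rogersFineRatio, div_mul_eq_mul_div,
      mul_div_mul_right _ _ (sub_ne_zero.2 (htq (k + 1) (by omega)).symm)]
    ring
  rw [shiftedFine, one_sub_mul_fineSeries hq htk hbk, shiftedFine, ← mul_assoc _ (1 - _),
    hcoef, mul_assoc b (q ^ (k + 1)) q, mul_assoc t (q ^ k) q, ← pow_succ, ← pow_succ]

theorem isBoundedUnder_norm_shiftedFine (hq : ‖q‖ < 1) (ht : ‖t‖ < 1) :
    IsBoundedUnder (· ≤ ·) atTop (fun k ↦ ‖shiftedFine b q t k‖) := by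
  have hbk : Tendsto (fun k ↦ b * q ^ (k + 1)) atTop (𝓝 0) := by
    simpa using ((tendsto_add_atTop_iff_nat 1).2
      (tendsto_pow_atTop_nhds_zero_of_norm_lt_one hq)).const_mul b
  have hsmall : ∀ᶠ k in atTop, ‖b * q ^ (k + 1)‖ ≤ (1 - ‖q‖) / 2 :=
    hbk.norm.eventually (ge_mem_nhds (by rw [norm_zero]; linarith))
  refine isBoundedUnder_of_eventually_le (a := 2 * (2 * (1 - ‖t‖)⁻¹)) ?_
  filter_upwards [hsmall] with k hk
  have htk := norm_mul_pow_le_of_norm_le_one t hq.le k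
  rw [shiftedFine, norm_mul]
  gcongr
  · calc ‖1 - t * q ^ k‖ ≤ ‖(1 : ℂ)‖ + ‖t * q ^ k‖ := norm_sub_le _ _
      _ ≤ 2 := by rw [norm_one]; linarith
  · refine (norm_fineSeries_le hq (htk.trans_lt ht) hk).trans ?_
    gcongr

end RogersFine

theorem rogers_fine_general (q b t : ℂ) (hq1 : ‖q‖ < 1) (ht : ‖t‖ < 1)
    (hb : ∀ m : ℕ, 1 ≤ m → b * q ^ m ≠ 1)
    (htq : ∀ m : ℕ, 1 ≤ m → t * q ^ m ≠ 1) :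
    (1 - t) * ∑' n : ℕ, t ^ n / qPoch (b * q) q n
      = ∑' n : ℕ, (b * t) ^ n * q ^ (n ^ 2) /
          (qPoch (b * q) q n * qPoch (t * q) q n) := by
  have hsum := summable_rogersFineTerm (b := b) (t := t) hq1
  calc (1 - t) * ∑' n : ℕ, t ^ n / qPoch (b * q) q n = shiftedFine b q t 0 := by
        simp [shiftedFine, fineSeries]
    _ = ∑' n : ℕ, rogersFineTerm b q t n :=
        eq_tsum_of_eq_one_add_mul (shiftedFine_eq_one_add_mul hq1 ht hb htq)
          (rogersFineTerm_zero b q t) (rogersFineTerm_succ b q t) hsum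
          (hsum.tendsto_atTop_zero.zero_mul_isBoundedUnder_le
            (isBoundedUnder_norm_shiftedFine hq1 ht))

/-- Rogers–Fine type identity (Fine's (12.3)):
`(1−t)·F(0,b;t;q) = Σ_{n≥0} (bt)^n q^{n²}/((bq;q)_n (tq;q)_n)`. -/
theorem rogers_fine (q b t : ℂ) (hq0 : 0 < ‖q‖) (hq1 : ‖q‖ < 1) (ht : ‖t‖ < 1)
    (hb : ∀ m : ℕ, 1 ≤ m → b * q ^ m ≠ 1)
    (htq : ∀ m : ℕ, 1 ≤ m → t * q ^ m ≠ 1) :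
    (1 - t) * ∑' n : ℕ, t ^ n / qPoch (b * q) q n
      = ∑' n : ℕ, (b * t) ^ n * q ^ (n ^ 2) /
          (qPoch (b * q) q n * qPoch (t * q) q n) :=
  rogers_fine_general q b t hq1 ht hb htq
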